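/- arXiv:2006.09684 — 7 statements merged into one kernel-verified Lean document; each statement's English description precedes it below -/
import Mathlib

section
/- Suppose Q_{ij} is monotonically increasing in j and Q_{ij}/q_j is monotonically decreasing in j (with all q_j > 0). If for λ₁ ≥ λ₂ ≥ 0 the actions j₁ and j₂ are the largest maximizers of Q_{ij} - λ₁·q_j and Q_{ij} - λ₂·q_j respectively, then Q_{i j₁}/q_{j₁} ≥ Q_{i j₂}/q_{j₂}. -/
/-- Lemma 1: with `Q i` increasing in `j` and `Q i j / q j` decreasing in `j`
(`q` strictly increasing positive), if `λ₁ ≥ λ₂ ≥ 0` and `j₁`, `j₂` are the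
largest maximizers of `Q i j - λ₁ q j` and `Q i j - λ₂ q j` respectively,
then `Q i j₁ / q j₁ ≥ Q i j₂ / q j₂`. -/
theorem stmt2 {N M : ℕ} (Q : Fin N → Fin M → ℝ) (q : Fin M → ℝ)
    (hq : StrictMono q) (hqpos : ∀ j, 0 < q j) (i : Fin N)
    (hQ : Monotone (Q i)) (hQq : Antitone (fun j => Q i j / q j))
    (lam₁ lam₂ : ℝ) (hlam₂ : 0 ≤ lam₂) (hlam : lam₂ ≤ lam₁)
    (j₁ j₂ : Fin M)
    (hj₁max : ∀ j, Q i j - lam₁ * q j ≤ Q i j₁ - lam₁ * q j₁)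
    (hj₁big : ∀ j, Q i j - lam₁ * q j = Q i j₁ - lam₁ * q j₁ → j ≤ j₁)
    (hj₂max : ∀ j, Q i j - lam₂ * q j ≤ Q i j₂ - lam₂ * q j₂)
    (hj₂big : ∀ j, Q i j - lam₂ * q j = Q i j₂ - lam₂ * q j₂ → j ≤ j₂) :
    Q i j₂ / q j₂ ≤ Q i j₁ / q j₁ := by
  have key : j₁ ≤ j₂ := by
    rcases eq_or_lt_of_le hlam with heq | hlt
    · -- same lambda: maximizers of the same function, largest one, so j₁ = j₂
      subst heq
      have h1 := hj₁max j₂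
      have h2 := hj₂max j₁
      have : Q i j₁ - lam₂ * q j₁ = Q i j₂ - lam₂ * q j₂ := le_antisymm h2 h1
      exact hj₂big j₁ this
    · have h1 := hj₁max j₂
      have h2 := hj₂max j₁
      -- (lam₁ - lam₂)(q j₁ - q j₂) ≤ 0
      have hq12 : q j₁ ≤ q j₂ := by nlinarith
      exact le_of_not_gt fun h => absurd hq12 (not_le.mpr (hq h))
  exact hQq key
end

section
/- Under the assumptions that q is strictly increasing and positive, Q_{ij} is increasing in j, and Q_{ij}/q_j is decreasing in j, the largest maximizer j*(λ) of Q_{ij} - λ·q_j is a monotonically decreasing function of λ ≥ 0. -/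
/-- Under the assumptions (`q` strictly increasing positive, `Q i` increasing,
`Q i j / q j` decreasing), the largest maximizer `j*(λ)` of `Q i j - λ q j`
is a decreasing function of `λ ≥ 0`. -/
theorem stmt3 {N M : ℕ} (Q : Fin N → Fin M → ℝ) (q : Fin M → ℝ)
    (hq : StrictMono q) (hqpos : ∀ j, 0 < q j) (i : Fin N)
    (hQ : Monotone (Q i)) (hQq : Antitone (fun j => Q i j / q j))
    (lam₁ lam₂ : ℝ) (hlam₂ : 0 ≤ lam₂) (hlam : lam₂ ≤ lam₁)
    (j₁ j₂ : Fin M)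
    (hj₁max : ∀ j, Q i j - lam₁ * q j ≤ Q i j₁ - lam₁ * q j₁)
    (hj₁big : ∀ j, Q i j - lam₁ * q j = Q i j₁ - lam₁ * q j₁ → j ≤ j₁)
    (hj₂max : ∀ j, Q i j - lam₂ * q j ≤ Q i j₂ - lam₂ * q j₂)
    (hj₂big : ∀ j, Q i j - lam₂ * q j = Q i j₂ - lam₂ * q j₂ → j ≤ j₂) :
    j₁ ≤ j₂ := by
  by_contra h
  push_neg at h
  have hqlt : q j₂ < q j₁ := hq h
  have h1 := hj₁max j₂
  have h2 := hj₂max j₁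
  -- lam₁ * (q j₁ - q j₂) ≤ Q i j₁ - Q i j₂ ≤ lam₂ * (q j₁ - q j₂)
  have key : lam₁ * (q j₁ - q j₂) ≤ lam₂ * (q j₁ - q j₂) := by nlinarith
  have heq : lam₁ = lam₂ := le_antisymm (by nlinarith) hlam
  subst heq
  have : j₁ ≤ j₂ := hj₂big j₁ (by linarith)
  exact absurd this (not_le.mpr h)
end

section
/- Under Assumptions 1 and 2 (Q increasing in j, Q/q decreasing in j, q strictly increasing positive), both the optimal total gain ∑_i Q_{i, j*_i(λ)} and its total cost ∑_i q_{j*_i(λ)} are monotonically decreasing functions of λ ≥ 0, where j*_i(λ) is the largest maximizer of Q_{ij} - λ·q_j for request i. -/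
/-- Lemma 2: under Assumptions 1 and 2, both the optimal total gain
`∑ i, Q i (j* i λ)` and its total cost `∑ i, q (j* i λ)` are decreasing in `λ ≥ 0`,
where `j* i λ` is the largest maximizer of `Q i j - λ q j`. -/
theorem stmt4 {N M : ℕ} (Q : Fin N → Fin M → ℝ) (q : Fin M → ℝ)
    (hq : StrictMono q) (hqpos : ∀ j, 0 < q j)
    (hQ : ∀ i, Monotone (Q i)) (hQq : ∀ i, Antitone (fun j => Q i j / q j))
    (jstar : ℝ → Fin N → Fin M)
    (hmax : ∀ lam, 0 ≤ lam → ∀ i j, Q i j - lam * q j ≤ Q i (jstar lam i) - lam * q (jstar lam i))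
    (hbig : ∀ lam, 0 ≤ lam → ∀ i j,
      Q i j - lam * q j = Q i (jstar lam i) - lam * q (jstar lam i) → j ≤ jstar lam i) :
    ∀ lam₁ lam₂ : ℝ, 0 ≤ lam₂ → lam₂ ≤ lam₁ →
      (∑ i, Q i (jstar lam₁ i)) ≤ (∑ i, Q i (jstar lam₂ i)) ∧
      (∑ i, q (jstar lam₁ i)) ≤ (∑ i, q (jstar lam₂ i)) := by
  intro lam₁ lam₂ h2 h12
  have h1 : 0 ≤ lam₁ := le_trans h2 h12
  have key : ∀ i, jstar lam₁ i ≤ jstar lam₂ i := by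
    intro i
    rcases eq_or_lt_of_le h12 with h | h
    · rw [h]
    · have a := hmax lam₁ h1 i (jstar lam₂ i)
      have b := hmax lam₂ h2 i (jstar lam₁ i)
      have : q (jstar lam₁ i) ≤ q (jstar lam₂ i) := by nlinarith
      exact (hq.le_iff_le).mp this
  exact ⟨Finset.sum_le_sum fun i _ => hQ i (key i),
    Finset.sum_le_sum fun i _ => hq.monotone (key i)⟩
end

section
/- If the total cost function λ ↦ C(λ) = ∑_i q_{j*_i(λ)} is monotonically decreasing and there exists λ* ≥ 0 with C(λ*) = C, then the greedy assignment at λ* (assigning each request its action j*_i(λ*)) is an optimal solution to the knapsack problem: it maximizes ∑_i Q_{i,x_i} over all assignments x with ∑_i q_{x_i} ≤ C. -/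
/-- Theorem 1: if the total cost `λ ↦ ∑ i, q (j* i λ)` is decreasing and there is
`λ* ≥ 0` with cost exactly `C`, then the greedy assignment at `λ*` maximizes the
total gain among all assignments with total cost at most `C`. -/
theorem stmt5 {N M : ℕ} (Q : Fin N → Fin M → ℝ) (q : Fin M → ℝ)
    (hqpos : ∀ j, 0 < q j) (C : ℝ)
    (jstar : ℝ → Fin N → Fin M)
    (hmax : ∀ lam, 0 ≤ lam → ∀ i j, Q i j - lam * q j ≤ Q i (jstar lam i) - lam * q (jstar lam i))
    (hcost_anti : ∀ lam₁ lam₂ : ℝ, 0 ≤ lam₂ → lam₂ ≤ lam₁ →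
      (∑ i, q (jstar lam₁ i)) ≤ (∑ i, q (jstar lam₂ i)))
    (lamstar : ℝ) (hlamstar : 0 ≤ lamstar)
    (hC : (∑ i, q (jstar lamstar i)) = C) :
    ∀ x : Fin N → Fin M, (∑ i, q (x i)) ≤ C →
      (∑ i, Q i (x i)) ≤ ∑ i, Q i (jstar lamstar i) := by
  intro x hx
  have key : (∑ i, (Q i (x i) - lamstar * q (x i))) ≤
      ∑ i, (Q i (jstar lamstar i) - lamstar * q (jstar lamstar i)) :=
    Finset.sum_le_sum fun i _ => hmax lamstar hlamstar i (x i)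
  have h2 : lamstar * (∑ i, q (x i)) ≤ lamstar * (∑ i, q (jstar lamstar i)) := by
    apply mul_le_mul_of_nonneg_left _ hlamstar
    rw [hC]; exact hx
  simp only [Finset.sum_sub_distrib, ← Finset.mul_sum] at key
  linarith
end

section
/- If λ ≥ 0 and x* is the one-hot assignment choosing for each i an action j_i with Q_{i j_i} - λ q_{j_i} = max(0, max_j (Q_{ij} - λ q_j)) and the total cost of x* exactly equals C, then x* is optimal among all fractional assignments satisfying the budget C (complementary slackness gives strong duality). -/
/-- Strong duality via complementary slackness: if `λ ≥ 0` and the one-hot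
assignment selects for each `i` an action `jsel i` with
`Q i (jsel i) - λ q (jsel i) = max 0 (max_j (Q i j - λ q j))`, and its total cost
equals `C` exactly, then it is optimal among all fractional assignments with
budget `C`. -/
theorem stmt7 {N M : ℕ} (hM : 0 < M) (Q : Fin N → Fin M → ℝ) (q : Fin M → ℝ)
    (hq : ∀ j, 0 ≤ q j) (C : ℝ) (hC : 0 ≤ C)
    (lam : ℝ) (hlam : 0 ≤ lam) (jsel : Fin N → Fin M)
    (hsel : ∀ i, Q i (jsel i) - lam * q (jsel i) =
      max 0 (Finset.univ.sup' ⟨⟨0, hM⟩, Finset.mem_univ _⟩ (fun j => Q i j - lam * q j)))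
    (hcost : (∑ i, q (jsel i)) = C) :
    ∀ x : Fin N → Fin M → ℝ,
      (∀ i j, 0 ≤ x i j) → (∀ i, (∑ j, x i j) ≤ 1) →
      (∑ i, ∑ j, x i j * q j) ≤ C →
      (∑ i, ∑ j, x i j * Q i j) ≤ ∑ i, Q i (jsel i) := by
  intro x hx hsum hbud
  set Mi : Fin N → ℝ := fun i =>
    max 0 (Finset.univ.sup' ⟨⟨0, hM⟩, Finset.mem_univ _⟩ (fun j => Q i j - lam * q j)) with hMidef
  have hMi0 : ∀ i, 0 ≤ Mi i := fun i => le_max_left _ _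
  have hMile : ∀ i j, Q i j - lam * q j ≤ Mi i := by
    intro i j
    exact le_trans (Finset.le_sup' (fun j => Q i j - lam * q j) (Finset.mem_univ j))
      (le_max_right _ _)
  have h1 : ∀ i, ∑ j, x i j * (Q i j - lam * q j) ≤ Mi i := by
    intro i
    calc ∑ j, x i j * (Q i j - lam * q j) ≤ ∑ j, x i j * Mi i := by
          apply Finset.sum_le_sum; intro j _
          exact mul_le_mul_of_nonneg_left (hMile i j) (hx i j)
      _ = (∑ j, x i j) * Mi i := by rw [← Finset.sum_mul]
      _ ≤ 1 * Mi i := mul_le_mul_of_nonneg_right (hsum i) (hMi0 i)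
      _ = Mi i := one_mul _
  have hsplit : ∑ i, ∑ j, x i j * Q i j
      = (∑ i, ∑ j, x i j * (Q i j - lam * q j)) + lam * (∑ i, ∑ j, x i j * q j) := by
    rw [Finset.mul_sum, ← Finset.sum_add_distrib]
    apply Finset.sum_congr rfl
    intro i _
    rw [Finset.mul_sum, ← Finset.sum_add_distrib]
    apply Finset.sum_congr rfl
    intro j _
    ring
  have hrhs : ∑ i, Q i (jsel i) = (∑ i, Mi i) + lam * C := by
    rw [← hcost, Finset.mul_sum, ← Finset.sum_add_distrib]
    apply Finset.sum_congr rfl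
    intro i _
    have h := hsel i
    simp only [hMidef]
    linarith
  rw [hsplit, hrhs]
  have h2 : (∑ i, ∑ j, x i j * (Q i j - lam * q j)) ≤ ∑ i, Mi i :=
    Finset.sum_le_sum fun i _ => h1 i
  have h3 : lam * (∑ i, ∑ j, x i j * q j) ≤ lam * C := mul_le_mul_of_nonneg_left hbud hlam
  linarith
end

section
/- The LP relaxation of the allocation problem with a single budget constraint has an optimal solution with at most one fractional request. -/
lemma exists_pos_le {ι : Type*} [Finite ι] (f : ι → ℝ) (hf : ∀ k, 0 < f k) :
    ∃ ε : ℝ, 0 < ε ∧ ∀ k, ε ≤ f k := by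
  cases isEmpty_or_nonempty ι with
  | inl h => exact ⟨1, one_pos, fun k => (h.false k).elim⟩
  | inr h =>
    obtain ⟨k0, hk0⟩ := Finite.exists_min f
    exact ⟨f k0, hf k0, hk0⟩

lemma sum_if_two {α : Type*} [Fintype α] [DecidableEq α] (u v : α) (huv : u ≠ v) (a b : ℝ) :
    ∑ i, (if i = u then a else if i = v then b else 0) = a + b := by
  have h : ∀ i, (if i = u then a else if i = v then b else 0)
      = (if i = u then a else 0) + (if i = v then b else 0) := by
    intro i
    split_ifs with h1 h2 <;> simp_all
  rw [Finset.sum_congr rfl fun i _ => h i, Finset.sum_add_distrib]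
  simp

lemma rowdir {M : ℕ} (w : Fin M → ℝ) (hw : ∀ j, 0 ≤ w j) (hsum : ∑ j, w j ≤ 1)
    (hfrac : ¬ ∀ j, w j = 0 ∨ w j = 1) :
    ∃ d : Fin M → ℝ, (∃ j, d j ≠ 0) ∧ (∀ j, d j ≠ 0 → 0 < w j) ∧
      ((∑ j, w j) = 1 → ∑ j, d j = 0) := by
  push_neg at hfrac
  obtain ⟨j0, h0, h1⟩ := hfrac
  have hpos : 0 < w j0 := (hw j0).lt_of_ne (Ne.symm h0)
  by_cases ht : (∑ j, w j) = 1
  · have hle : w j0 ≤ 1 := ht ▸ Finset.single_le_sum (fun j _ => hw j) (Finset.mem_univ j0)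
    have hlt : w j0 < 1 := lt_of_le_of_ne hle h1
    have herase : 0 < ∑ j ∈ Finset.univ.erase j0, w j := by
      have := Finset.sum_erase_add Finset.univ w (Finset.mem_univ j0)
      linarith
    have h2 : ∃ j2 ∈ Finset.univ.erase j0, 0 < w j2 := by
      by_contra hcon
      push_neg at hcon
      have : ∑ j ∈ Finset.univ.erase j0, w j ≤ 0 :=
        Finset.sum_nonpos fun j hj => (hcon j hj)
      linarith
    obtain ⟨j2, hj2mem, hj2pos⟩ := h2
    have hne : j2 ≠ j0 := (Finset.mem_erase.mp hj2mem).1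
    refine ⟨fun j => if j = j0 then 1 else if j = j2 then -1 else 0, ⟨j0, by simp⟩, ?_, ?_⟩
    · intro j hj
      by_cases hj0 : j = j0
      · subst hj0; exact hpos
      by_cases hj2 : j = j2
      · subst hj2; exact hj2pos
      · simp [hj0, hj2] at hj
    · intro _
      rw [sum_if_two j0 j2 (Ne.symm hne)]
      ring
  · refine ⟨Pi.single j0 1, ⟨j0, by simp⟩, ?_, fun h => absurd h ht⟩
    intro j hj
    rcases eq_or_ne j j0 with rfl | h
    · exact hpos
    · simp [Pi.single_eq_of_ne h] at hj

lemma sum2_lin {N M : ℕ} (f g h : Fin N → Fin M → ℝ) (c : ℝ) :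
    ∑ i, ∑ j, (f i j + c * g i j) * h i j
      = (∑ i, ∑ j, f i j * h i j) + c * (∑ i, ∑ j, g i j * h i j) := by
  rw [Finset.mul_sum, ← Finset.sum_add_distrib]
  refine Finset.sum_congr rfl fun i _ => ?_
  rw [Finset.mul_sum, ← Finset.sum_add_distrib]
  exact Finset.sum_congr rfl fun j _ => by ring

lemma sum2_sq {N M : ℕ} (f g : Fin N → Fin M → ℝ) (c : ℝ) :
    ∑ i, ∑ j, (f i j + c * g i j) ^ 2
      = (∑ i, ∑ j, (f i j) ^ 2) + 2 * c * (∑ i, ∑ j, f i j * g i j)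
        + c ^ 2 * (∑ i, ∑ j, (g i j) ^ 2) := by
  rw [Finset.mul_sum, Finset.mul_sum, ← Finset.sum_add_distrib, ← Finset.sum_add_distrib]
  refine Finset.sum_congr rfl fun i _ => ?_
  rw [Finset.mul_sum, Finset.mul_sum, ← Finset.sum_add_distrib, ← Finset.sum_add_distrib]
  exact Finset.sum_congr rfl fun j _ => by ring

set_option maxHeartbeats 2000000 in
/-- The LP relaxation of the allocation problem with a single budget constraint
has an optimal solution with at most one fractional request: if an optimal
fractional solution exists, there is an optimal solution in which at most one
request `i` has a row `x i` that is not a 0/1 vector. -/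
theorem stmt8 {N M : ℕ} (Q : Fin N → Fin M → ℝ) (q : Fin M → ℝ)
    (hq : ∀ j, 0 ≤ q j) (C : ℝ) (hC : 0 ≤ C)
    (Feasible : (Fin N → Fin M → ℝ) → Prop)
    (hFeas : ∀ x, Feasible x ↔
      ((∀ i j, 0 ≤ x i j) ∧ (∀ i, (∑ j, x i j) ≤ 1) ∧ (∑ i, ∑ j, x i j * q j) ≤ C))
    (hopt : ∃ x, Feasible x ∧ ∀ y, Feasible y →
      (∑ i, ∑ j, y i j * Q i j) ≤ (∑ i, ∑ j, x i j * Q i j)) :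
    ∃ x, Feasible x ∧ (∀ y, Feasible y →
        (∑ i, ∑ j, y i j * Q i j) ≤ (∑ i, ∑ j, x i j * Q i j)) ∧
      ({i : Fin N | ¬ ∀ j, x i j = 0 ∨ x i j = 1}).ncard ≤ 1 := by
  obtain ⟨x₀, hx₀F, hx₀opt⟩ := hopt
  set obj : (Fin N → Fin M → ℝ) → ℝ := fun x => ∑ i, ∑ j, x i j * Q i j with hobj
  set T : Set (Fin N → Fin M → ℝ) :=
    {x | (∀ i j, 0 ≤ x i j) ∧ (∀ i, (∑ j, x i j) ≤ 1) ∧ (∑ i, ∑ j, x i j * q j) ≤ C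
        ∧ obj x₀ ≤ obj x} with hT
  have hmemT : ∀ x, x ∈ T ↔ (Feasible x ∧ obj x₀ ≤ obj x) := by
    intro x
    rw [hFeas]
    constructor
    · rintro ⟨a, b, c, d⟩; exact ⟨⟨a, b, c⟩, d⟩
    · rintro ⟨⟨a, b, c⟩, d⟩; exact ⟨a, b, c, d⟩
  -- continuity facts
  have hcoord : ∀ (i : Fin N) (j : Fin M), Continuous fun x : Fin N → Fin M → ℝ => x i j :=
    fun i j => (continuous_apply j).comp (continuous_apply i)
  have hcsum : ∀ (h : Fin N → Fin M → ℝ),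
      Continuous fun x : Fin N → Fin M → ℝ => ∑ i, ∑ j, x i j * h i j := by
    intro h
    refine continuous_finset_sum _ fun i _ => continuous_finset_sum _ fun j _ => ?_
    exact (hcoord i j).mul continuous_const
  have hTclosed : IsClosed T := by
    have h1 : IsClosed {x : Fin N → Fin M → ℝ | ∀ i j, 0 ≤ x i j} := by
      have : {x : Fin N → Fin M → ℝ | ∀ i j, 0 ≤ x i j}
          = ⋂ i, ⋂ j, {x | 0 ≤ x i j} := by
        ext x; simp [Set.mem_iInter]
      rw [this]
      exact isClosed_iInter fun i => isClosed_iInter fun j =>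
        isClosed_le continuous_const (hcoord i j)
    have h2 : IsClosed {x : Fin N → Fin M → ℝ | ∀ i, (∑ j, x i j) ≤ 1} := by
      have : {x : Fin N → Fin M → ℝ | ∀ i, (∑ j, x i j) ≤ 1}
          = ⋂ i, {x | (∑ j, x i j) ≤ 1} := by
        ext x; simp [Set.mem_iInter]
      rw [this]
      exact isClosed_iInter fun i =>
        isClosed_le (continuous_finset_sum _ fun j _ => hcoord i j) continuous_const
    have h3 : IsClosed {x : Fin N → Fin M → ℝ | (∑ i, ∑ j, x i j * q j) ≤ C} :=
      isClosed_le (hcsum fun _ j => q j) continuous_const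
    have h4 : IsClosed {x : Fin N → Fin M → ℝ | obj x₀ ≤ obj x} :=
      isClosed_le continuous_const (hcsum Q)
    have : T = {x : Fin N → Fin M → ℝ | ∀ i j, 0 ≤ x i j}
        ∩ ({x | ∀ i, (∑ j, x i j) ≤ 1}
          ∩ ({x | (∑ i, ∑ j, x i j * q j) ≤ C} ∩ {x | obj x₀ ≤ obj x})) := by
      ext x
      simp only [hT, Set.mem_setOf_eq, Set.mem_inter_iff]
    rw [this]
    exact h1.inter (h2.inter (h3.inter h4))
  have hTcompact : IsCompact T := by
    have hK : IsCompact (Set.univ.pi fun _ : Fin N =>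
        (Set.univ.pi fun _ : Fin M => Set.Icc (0:ℝ) 1)) :=
      isCompact_univ_pi fun _ => isCompact_univ_pi fun _ => isCompact_Icc
    refine hK.of_isClosed_subset hTclosed ?_
    intro x hx
    rw [Set.mem_univ_pi]
    intro i
    rw [Set.mem_univ_pi]
    intro j
    refine ⟨hx.1 i j, ?_⟩
    calc x i j ≤ ∑ j', x i j' :=
          Finset.single_le_sum (fun j' _ => hx.1 i j') (Finset.mem_univ j)
      _ ≤ 1 := hx.2.1 i
  have hTne : T.Nonempty := ⟨x₀, (hmemT x₀).mpr ⟨hx₀F, le_refl _⟩⟩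
  have hgcont : ContinuousOn (fun x : Fin N → Fin M → ℝ => ∑ i, ∑ j, (x i j) ^ 2) T := by
    refine Continuous.continuousOn ?_
    exact continuous_finset_sum _ fun i _ => continuous_finset_sum _ fun j _ =>
      (hcoord i j).pow 2
  obtain ⟨e, heT, hemax⟩ := hTcompact.exists_isMaxOn hTne hgcont
  -- e is an optimal feasible solution maximizing the sum of squares over the argmax set
  have heF : Feasible e := ((hmemT e).mp heT).1
  have heopt : obj x₀ ≤ obj e := ((hmemT e).mp heT).2
  obtain ⟨hA, hB, hCb⟩ := (hFeas e).mp heF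
  refine ⟨e, heF, fun y hy => (hx₀opt y hy).trans heopt, ?_⟩
  rw [Set.ncard_le_one (Set.toFinite _)]
  intro u hu v hv
  by_contra huv
  simp only [Set.mem_setOf_eq] at hu hv
  obtain ⟨du, ⟨ju, hju⟩, hduP, hduS⟩ := rowdir (e u) (hA u) (hB u) hu
  obtain ⟨dv, ⟨jv, hjv⟩, hdvP, hdvS⟩ := rowdir (e v) (hA v) (hB v) hv
  set Δu := ∑ j, du j * q j with hΔu
  set Δv := ∑ j, dv j * q j with hΔv
  obtain ⟨s, t, hst, hst0⟩ : ∃ s t : ℝ, ¬(s = 0 ∧ t = 0) ∧ s * Δu + t * Δv = 0 := by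
    by_cases h : Δu = 0 ∧ Δv = 0
    · exact ⟨1, 0, by norm_num, by rw [h.1]; ring⟩
    · refine ⟨Δv, -Δu, fun hc => h ⟨by linarith [hc.2], hc.1⟩, by ring⟩
  set d2 : Fin N → Fin M → ℝ :=
    fun i j => if i = u then s * du j else if i = v then t * dv j else 0 with hd2
  have hvu : v ≠ u := fun h => huv h.symm
  have hd2u : ∀ j, d2 u j = s * du j := fun j => by simp [hd2]
  have hd2v : ∀ j, d2 v j = t * dv j := fun j => by simp [hd2, hvu]
  have hd2o : ∀ i, i ≠ u → i ≠ v → ∀ j, d2 i j = 0 := fun i h1 h2 j => by simp [hd2, h1, h2]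
  have hd2P : ∀ i j, d2 i j ≠ 0 → 0 < e i j := by
    intro i j h
    by_cases hiu : i = u
    · rw [hiu] at h ⊢; rw [hd2u] at h; exact hduP j (right_ne_zero_of_mul h)
    by_cases hiv : i = v
    · rw [hiv] at h ⊢; rw [hd2v] at h; exact hdvP j (right_ne_zero_of_mul h)
    · exact absurd (hd2o i hiu hiv j) h
  have hd2ne : ∃ i j, d2 i j ≠ 0 := by
    rcases not_and_or.mp hst with hs | ht
    · exact ⟨u, ju, by rw [hd2u]; exact mul_ne_zero hs hju⟩
    · exact ⟨v, jv, by rw [hd2v]; exact mul_ne_zero ht hjv⟩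
  have hrowu : ∑ j, d2 u j = s * ∑ j, du j := by
    simp only [hd2u]; rw [Finset.mul_sum]
  have hrowv : ∑ j, d2 v j = t * ∑ j, dv j := by
    simp only [hd2v]; rw [Finset.mul_sum]
  have hrowo : ∀ i, i ≠ u → i ≠ v → ∑ j, d2 i j = 0 := by
    intro i h1 h2
    rw [Finset.sum_congr rfl fun j _ => hd2o i h1 h2 j]
    simp
  have hbud : ∑ i, ∑ j, d2 i j * q j = 0 := by
    have hrow : ∀ i, ∑ j, d2 i j * q j
        = (if i = u then s * Δu else if i = v then t * Δv else 0) := by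
      intro i
      by_cases hiu : i = u
      · rw [hiu, if_pos rfl]
        rw [hΔu, Finset.mul_sum]
        exact Finset.sum_congr rfl fun j _ => by rw [hd2u]; ring
      by_cases hiv : i = v
      · rw [hiv, if_neg hvu, if_pos rfl]
        rw [hΔv, Finset.mul_sum]
        exact Finset.sum_congr rfl fun j _ => by rw [hd2v]; ring
      · rw [if_neg hiu, if_neg hiv]
        rw [Finset.sum_congr rfl fun j _ => by rw [hd2o i hiu hiv j]]
        simp
    rw [Finset.sum_congr rfl fun i _ => hrow i, sum_if_two u v huv]
    exact hst0
  -- choose ε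
  set D1 : Fin N × Fin M → ℝ :=
    fun p => if d2 p.1 p.2 = 0 then 1 else e p.1 p.2 / |d2 p.1 p.2| with hD1
  have hD1pos : ∀ p, 0 < D1 p := by
    intro p
    rw [hD1]
    dsimp only
    split_ifs with h
    · norm_num
    · exact div_pos (hd2P _ _ h) (abs_pos.mpr h)
  obtain ⟨ε1, hε1pos, hε1⟩ := exists_pos_le D1 hD1pos
  set ε2 : ℝ := if (∑ j, e u j) = 1 then 1 else (1 - ∑ j, e u j) / (|s * ∑ j, du j| + 1)
    with hε2def
  have hε2pos : 0 < ε2 := by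
    rw [hε2def]
    split_ifs with h
    · norm_num
    · apply div_pos
      · have := hB u; cases lt_or_eq_of_le this with
        | inl h' => linarith
        | inr h' => exact absurd h' h
      · positivity
  set ε3 : ℝ := if (∑ j, e v j) = 1 then 1 else (1 - ∑ j, e v j) / (|t * ∑ j, dv j| + 1)
    with hε3def
  have hε3pos : 0 < ε3 := by
    rw [hε3def]
    split_ifs with h
    · norm_num
    · apply div_pos
      · have := hB v; cases lt_or_eq_of_le this with
        | inl h' => linarith
        | inr h' => exact absurd h' h
      · positivity
  set ε : ℝ := min ε1 (min ε2 ε3) with hεdef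
  have hεpos : 0 < ε := lt_min hε1pos (lt_min hε2pos hε3pos)
  have hεle1 : ε ≤ ε1 := min_le_left _ _
  have hεle2 : ε ≤ ε2 := le_trans (min_le_right _ _) (min_le_left _ _)
  have hεle3 : ε ≤ ε3 := le_trans (min_le_right _ _) (min_le_right _ _)
  -- feasibility of perturbations
  have hfeasc : ∀ c : ℝ, |c| ≤ ε → Feasible (fun i j => e i j + c * d2 i j) := by
    intro c hc
    rw [hFeas]
    refine ⟨?_, ?_, ?_⟩
    · intro i j
      by_cases h : d2 i j = 0
      · simp only [h, mul_zero, add_zero]; exact hA i j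
      · have h1 : ε ≤ e i j / |d2 i j| := by
          have := hε1 (i, j)
          rw [hD1] at this
          simpa [h] using le_trans hεle1 this
        have h2 : ε * |d2 i j| ≤ e i j := (le_div_iff₀ (abs_pos.mpr h)).mp h1
        have h3 : |c * d2 i j| ≤ e i j := by
          rw [abs_mul]
          calc |c| * |d2 i j| ≤ ε * |d2 i j| :=
                mul_le_mul_of_nonneg_right hc (abs_nonneg _)
            _ ≤ e i j := h2
        have h4 := neg_abs_le (c * d2 i j)
        linarith
    · intro i
      rw [Finset.sum_add_distrib, ← Finset.mul_sum]
      by_cases hiu : i = u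
      · rw [hiu, hrowu]
        by_cases ht1 : (∑ j, e u j) = 1
        · rw [hduS ht1]; simp [ht1]
        · have h1 : ε ≤ (1 - ∑ j, e u j) / (|s * ∑ j, du j| + 1) := by
            have h0 : ε2 = (1 - ∑ j, e u j) / (|s * ∑ j, du j| + 1) := by
              rw [hε2def, if_neg ht1]
            rw [← h0]; exact hεle2
          have hden : (0:ℝ) < |s * ∑ j, du j| + 1 := by positivity
          have h2 : ε * (|s * ∑ j, du j| + 1) ≤ 1 - ∑ j, e u j := (le_div_iff₀ hden).mp h1
          have h3 : c * (s * ∑ j, du j) ≤ |c * (s * ∑ j, du j)| := le_abs_self _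
          have h4 : |c * (s * ∑ j, du j)| ≤ ε * (|s * ∑ j, du j| + 1) := by
            rw [abs_mul]
            have := mul_le_mul_of_nonneg_right hc (abs_nonneg (s * ∑ j, du j))
            nlinarith [abs_nonneg (s * ∑ j, du j), hεpos]
          linarith
      by_cases hiv : i = v
      · rw [hiv, hrowv]
        by_cases ht1 : (∑ j, e v j) = 1
        · rw [hdvS ht1]; simp [ht1]
        · have h1 : ε ≤ (1 - ∑ j, e v j) / (|t * ∑ j, dv j| + 1) := by
            have h0 : ε3 = (1 - ∑ j, e v j) / (|t * ∑ j, dv j| + 1) := by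
              rw [hε3def, if_neg ht1]
            rw [← h0]; exact hεle3
          have hden : (0:ℝ) < |t * ∑ j, dv j| + 1 := by positivity
          have h2 : ε * (|t * ∑ j, dv j| + 1) ≤ 1 - ∑ j, e v j := (le_div_iff₀ hden).mp h1
          have h3 : c * (t * ∑ j, dv j) ≤ |c * (t * ∑ j, dv j)| := le_abs_self _
          have h4 : |c * (t * ∑ j, dv j)| ≤ ε * (|t * ∑ j, dv j| + 1) := by
            rw [abs_mul]
            have := mul_le_mul_of_nonneg_right hc (abs_nonneg (t * ∑ j, dv j))
            nlinarith [abs_nonneg (t * ∑ j, dv j), hεpos]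
          linarith
      · rw [hrowo i hiu hiv, mul_zero, add_zero]
        exact hB i
    · have := sum2_lin e d2 (fun _ j => q j) c
      rw [this, hbud, mul_zero, add_zero]
      exact hCb
  -- both perturbations lie in the argmax set T
  set L : ℝ := ∑ i, ∑ j, d2 i j * Q i j with hL
  have hobj1 : obj (fun i j => e i j + ε * d2 i j) = obj e + ε * L := by
    rw [hobj]; exact sum2_lin e d2 Q ε
  have hobj2 : obj (fun i j => e i j + (-ε) * d2 i j) = obj e + (-ε) * L := by
    rw [hobj]; exact sum2_lin e d2 Q (-ε)
  have hf1 : Feasible (fun i j => e i j + ε * d2 i j) :=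
    hfeasc ε (by rw [abs_of_pos hεpos])
  have hf2 : Feasible (fun i j => e i j + (-ε) * d2 i j) :=
    hfeasc (-ε) (by rw [abs_neg, abs_of_pos hεpos])
  have hle1 := hx₀opt _ hf1
  have hle2 := hx₀opt _ hf2
  have hy1T : (fun i j => e i j + ε * d2 i j) ∈ T := by
    rw [hmemT]
    refine ⟨hf1, ?_⟩
    rw [hobj1]
    have h1 : obj e + ε * L ≤ obj x₀ := by rw [← hobj1]; exact hle1
    have h2 : obj e + (-ε) * L ≤ obj x₀ := by rw [← hobj2]; exact hle2
    linarith
  have hy2T : (fun i j => e i j + (-ε) * d2 i j) ∈ T := by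
    rw [hmemT]
    refine ⟨hf2, ?_⟩
    rw [hobj2]
    have h1 : obj e + ε * L ≤ obj x₀ := by rw [← hobj1]; exact hle1
    have h2 : obj e + (-ε) * L ≤ obj x₀ := by rw [← hobj2]; exact hle2
    linarith
  -- contradiction with maximality of the sum of squares
  have hg1 : ∑ i, ∑ j, (e i j + ε * d2 i j) ^ 2 ≤ ∑ i, ∑ j, (e i j) ^ 2 := hemax hy1T
  have hg2 : ∑ i, ∑ j, (e i j + (-ε) * d2 i j) ^ 2 ≤ ∑ i, ∑ j, (e i j) ^ 2 := hemax hy2T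
  have hsq1 := sum2_sq e d2 ε
  have hsq2 := sum2_sq e d2 (-ε)
  have hPpos : 0 < ∑ i, ∑ j, (d2 i j) ^ 2 := by
    obtain ⟨i0, j0, h0⟩ := hd2ne
    have h1 : (d2 i0 j0) ^ 2 ≤ ∑ j, (d2 i0 j) ^ 2 :=
      Finset.single_le_sum (f := fun j => (d2 i0 j) ^ 2) (fun j _ => sq_nonneg _)
        (Finset.mem_univ j0)
    have h2 : ∑ j, (d2 i0 j) ^ 2 ≤ ∑ i, ∑ j, (d2 i j) ^ 2 :=
      Finset.single_le_sum (f := fun i => ∑ j, (d2 i j) ^ 2)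
        (fun i _ => Finset.sum_nonneg fun j _ => sq_nonneg _) (Finset.mem_univ i0)
    have h3 : 0 < (d2 i0 j0) ^ 2 := pow_two_pos_of_ne_zero h0
    linarith
  have := mul_pos (pow_pos hεpos 2) hPpos
  nlinarith [hg1, hg2, hsq1, hsq2]
end

section
/- If the baseline strategy assigns every request the same action j₀ with total cost N·q_{j₀} = C, and there exist λ ≥ 0 such that the greedy λ-assignment has total cost at most C, then the greedy λ-assignment's total gain is at least the baseline's gain minus λ·(C - cost of greedy assignment); in particular if the greedy assignment exactly exhausts budget C, its total gain is at least the baseline total gain ∑_i Q_{i j₀}. -/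
/-- Comparison with the uniform baseline: if the baseline assigns every request
action `j₀` with total cost `N * q j₀ = C` and the greedy `λ`-assignment has
total cost at most `C`, then its total gain is at least the baseline's minus
`λ * (C - greedy cost)`; if it exactly exhausts `C`, it beats the baseline. -/
theorem stmt15 {N M : ℕ} (Q : Fin N → Fin M → ℝ) (q : Fin M → ℝ)
    (hq : ∀ j, 0 ≤ q j) (C : ℝ) (j₀ : Fin M) (hbase : (N : ℝ) * q j₀ = C)
    (lam : ℝ) (hlam : 0 ≤ lam) (jsel : Fin N → Fin M)
    (hmax : ∀ i j, Q i j - lam * q j ≤ Q i (jsel i) - lam * q (jsel i))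
    (hnonneg : ∀ i, 0 ≤ Q i (jsel i) - lam * q (jsel i))
    (hcost : (∑ i, q (jsel i)) ≤ C) :
    ((∑ i, Q i j₀) - lam * (C - ∑ i, q (jsel i)) ≤ ∑ i, Q i (jsel i)) ∧
      ((∑ i, q (jsel i)) = C → (∑ i, Q i j₀) ≤ ∑ i, Q i (jsel i)) := by
  have key : ∑ i, (Q i j₀ - lam * q j₀) ≤ ∑ i, (Q i (jsel i) - lam * q (jsel i)) :=
    Finset.sum_le_sum fun i _ => hmax i j₀
  have h1 : (∑ i, Q i j₀) - lam * (C - ∑ i, q (jsel i)) ≤ ∑ i, Q i (jsel i) := by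
    have := key
    simp only [Finset.sum_sub_distrib, ← Finset.mul_sum] at this
    have hsum : ∑ _i : Fin N, q j₀ = (N : ℝ) * q j₀ := by
      simp [Finset.sum_const, mul_comm]
    rw [hsum, hbase] at this
    nlinarith
  exact ⟨h1, fun h => by rw [h] at h1; simpa using h1⟩
end
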